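/- arXiv:0707.3504 — 3 statements merged into one kernel-verified Lean document; each statement's English description precedes it below -/
import Mathlib

section
/- Let D be a k×k Metzler matrix, c > 0, μ ≤ 0, and ξ ∈ ℝ^k a positive right eigenvector of D with D ξ = μ ξ; set ξ̲ = min_i ξ_i and ξ̄ = max_i ξ_i. Let u : [0,∞) → ℝ^k be a nonnegative solution of the cumulant system with u_0 = λ ∈ ℝ^k, λ ≥ 0, and C_0 = max_i λ_i/ξ_i. If μ = 0, then for all t ≥ 0, u_t ≥ (1 + (c ξ̲ / 2) C_0 t)^{−ξ̄/ξ̲} · e^{Dt} λ componentwise. If μ < 0, then for all t ≥ 0, u_t ≥ (1 + (c ξ̲ / (2|μ|)) C_0 (1 − e^{μ t}))^{−ξ̄/ξ̲} · e^{Dt} λ componentwise, where e^{Dt} is the matrix exponential. -/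
/-!
For a Metzler matrix `D`, nonnegativity is preserved by any `y` with `y' ≥ D y` at the
coordinates where `y_i ≤ 0`. Applied to `f ξ - u` with `f' = μ f - (c/2) ξ̲ f²`, this gives
`u ≤ f ξ`. Using this bound in the quadratic term, `h(t) e^{tD} λ` is a subsolution as soon as
`h' = -(c/2) ξ̄ f h`. Both scalar equations are solved explicitly: with
`g = 1 + (c ξ̲ / 2) C₀ ∫₀ᵗ e^{μs} ds`, take `f = C₀ e^{μt} / g` and `h = g^{-ξ̄/ξ̲}`.
-/

open Filter Topology Set Finset Matrix

def Matrix.IsMetzler {ι : Type*} (D : Matrix ι ι ℝ) : Prop := ∀ i j, i ≠ j → 0 ≤ D i j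

theorem eventually_slope_negPart_lt {f : ℝ → ℝ} {f' x r : ℝ} (hf : HasDerivAt f f' x)
    (hr : 0 < r) (hf' : f x ≤ 0 → -f' < r) :
    ∀ᶠ z in 𝓝[>] x, slope (fun s => (f s)⁻) x z < r := by
  rcases le_or_gt (f x) 0 with hx | hx
  · have hslope : ∀ᶠ z in 𝓝[>] x, -slope f x z < r :=
      (hf.tendsto_slope.mono_left (nhdsGT_le_nhdsNE x)).neg.eventually_lt_const (hf' hx)
    filter_upwards [hslope, self_mem_nhdsWithin] with z hz (hxz : x < z)
    have hd : 0 < z - x := sub_pos.2 hxz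
    rw [slope_def_field, ← neg_div, div_lt_iff₀ hd] at hz
    rw [slope_def_field, div_lt_iff₀ hd, negPart_eq_neg.2 hx, negPart_def, sub_neg_eq_add,
      ← lt_sub_iff_add_lt, max_lt_iff]
    constructor <;> nlinarith
  · filter_upwards [nhdsWithin_le_nhds (hf.continuousAt.eventually (lt_mem_nhds hx))] with z hz
    simp [slope_def_field, negPart_eq_zero.2 hz.le, negPart_eq_zero.2 hx.le, hr]

theorem eventually_slope_sup'_lt {ι : Type*} {s : Finset ι} (hs : s.Nonempty) {g : ι → ℝ → ℝ}
    {x r : ℝ} (hg : ∀ j ∈ s, ∀ᶠ z in 𝓝[>] x, slope (g j) x z < r) :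
    ∀ᶠ z in 𝓝[>] x, slope (fun t => s.sup' hs fun j => g j t) x z < r := by
  filter_upwards [(s.eventually_all).2 hg, self_mem_nhdsWithin] with z hz (hxz : x < z)
  obtain ⟨j, hj, hjz⟩ := exists_mem_eq_sup' hs fun j => g j z
  refine lt_of_le_of_lt ?_ (hz j hj)
  rw [slope_def_field, slope_def_field, hjz]
  gcongr
  exact le_sup' (fun j => g j x) hj

theorem Matrix.IsMetzler.neg_mul_le_mulVec {ι : Type*} [Fintype ι] {D : Matrix ι ι ℝ}
    (hD : D.IsMetzler) {v : ι → ℝ} {m : ℝ} {i : ι} (hvi : v i ≤ 0) (hm : ∀ j, (v j)⁻ ≤ m) :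
    -((∑ j, |D i j|) * m) ≤ (D *ᵥ v) i := by
  rw [mulVec, dotProduct, sum_mul, ← sum_neg_distrib]
  refine sum_le_sum fun j _ => ?_
  calc -(|D i j| * m) ≤ -(|D i j| * (v j)⁻) :=
        neg_le_neg (mul_le_mul_of_nonneg_left (hm j) (abs_nonneg _))
    _ ≤ D i j * v j := by
        by_cases hij : i = j
        · subst hij
          rw [negPart_eq_neg.2 hvi]
          nlinarith [le_abs_self (D i i)]
        · rw [abs_of_nonneg (hD i j hij)]
          nlinarith [neg_le.1 (neg_le_negPart (v j)), hD i j hij]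

theorem Matrix.IsMetzler.nonneg_of_hasDerivAt {ι : Type*} [Fintype ι] {D : Matrix ι ι ℝ}
    (hD : D.IsMetzler) {y y' : ℝ → ι → ℝ} (hy : ∀ t ≥ 0, HasDerivAt y (y' t) t) (h0 : 0 ≤ y 0)
    (hy' : ∀ t ≥ 0, ∀ i, y t i ≤ 0 → (D *ᵥ y t) i ≤ y' t i) :
    ∀ t ≥ 0, 0 ≤ y t := by
  rcases isEmpty_or_nonempty ι with hι | hι
  · exact fun _ _ i => isEmptyElim i
  -- The largest negative part `m` of the coordinates satisfies `D⁺m ≤ K m`; Gronwall gives `m = 0`.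
  set m : ℝ → ℝ := fun t => univ.sup' univ_nonempty fun j => (y t j)⁻
  set K := ∑ i, ∑ j, |D i j|
  have hm : ∀ t j, (y t j)⁻ ≤ m t := fun t j => le_sup' (fun j => (y t j)⁻) (mem_univ j)
  have hm_nonneg : ∀ t, 0 ≤ m t := fun t => (negPart_nonneg _).trans (hm t (Classical.arbitrary ι))
  have hyj : ∀ t ≥ 0, ∀ j, HasDerivAt (fun s => y s j) (y' t j) t :=
    fun t ht => hasDerivAt_pi.1 (hy t ht)
  have hdini : ∀ x ≥ 0, ∀ r, K * m x < r → ∀ᶠ z in 𝓝[>] x, slope m x z < r := by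
    intro x hx r hr
    have hr0 : 0 < r := lt_of_le_of_lt (mul_nonneg (by positivity) (hm_nonneg x)) hr
    refine eventually_slope_sup'_lt _ fun j _ =>
      eventually_slope_negPart_lt (hyj x hx j) hr0 fun hxj => ?_
    calc -y' x j ≤ -(D *ᵥ y x) j := neg_le_neg (hy' x hx j hxj)
      _ ≤ (∑ l, |D j l|) * m x := neg_le.1 (hD.neg_mul_le_mulVec hxj (hm x))
      _ ≤ K * m x := by
          gcongr
          · exact hm_nonneg x
          · exact single_le_sum (f := fun i => ∑ l, |D i l|) (fun i _ => by positivity)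
              (mem_univ j)
      _ < r := hr
  intro T hT i
  have hcont : ContinuousOn m (Icc 0 T) := ContinuousOn.finset_sup'_apply _ fun j _ =>
    continuous_negPart.comp_continuousOn fun t ht => (hyj t ht.1 j).continuousAt.continuousWithinAt
  have hmT : m T ≤ 0 := by
    simpa [gronwallBound_ε0_δ0] using
      le_gronwallBound_of_liminf_deriv_right_le (K := K) (ε := 0) hcont
      (fun x hx r hr => (hdini x hx.1 r hr).frequently)
      (sup'_le _ _ fun j _ => (negPart_eq_zero.2 (h0 j)).le) (fun _ _ => (add_zero _).ge)
      T ⟨hT, le_rfl⟩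
  exact negPart_eq_zero.1 (((hm T i).trans hmT).antisymm (negPart_nonneg _))

theorem Matrix.IsMetzler.le_of_hasDerivAt {ι : Type*} [Fintype ι] {D : Matrix ι ι ℝ}
    (hD : D.IsMetzler) {v w v' w' : ℝ → ι → ℝ} (hv : ∀ t ≥ 0, HasDerivAt v (v' t) t)
    (hw : ∀ t ≥ 0, HasDerivAt w (w' t) t) (h0 : v 0 ≤ w 0)
    (h : ∀ t ≥ 0, ∀ i, w t i ≤ v t i → v' t i - (D *ᵥ v t) i ≤ w' t i - (D *ᵥ w t) i) :
    ∀ t ≥ 0, v t ≤ w t := by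
  refine fun t ht => sub_nonneg.1 (hD.nonneg_of_hasDerivAt (y := w - v) (y' := w' - v')
    (fun t ht => (hw t ht).sub (hv t ht)) (sub_nonneg.2 h0) (fun t ht i hi => ?_) t ht)
  simp only [Pi.sub_apply, mulVec_sub] at hi ⊢
  linarith [h t ht i (sub_nonpos.1 hi)]

theorem Matrix.hasDerivAt_exp_smul_mulVec {ι : Type*} [Fintype ι] [DecidableEq ι]
    (D : Matrix ι ι ℝ) (v : ι → ℝ) (t : ℝ) :
    HasDerivAt (fun s : ℝ => NormedSpace.exp (s • D) *ᵥ v)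
      (D *ᵥ (NormedSpace.exp (t • D) *ᵥ v)) t := by
  let _ : NormedRing (Matrix ι ι ℝ) := Matrix.linftyOpNormedRing
  let _ : NormedAlgebra ℝ (Matrix ι ι ℝ) := Matrix.linftyOpNormedAlgebra
  let L : Matrix ι ι ℝ →ₗ[ℝ] ι → ℝ :=
    { toFun := (· *ᵥ v), map_add' := (add_mulVec · · v), map_smul' := (smul_mulVec · · v) }
  rw [mulVec_mulVec]
  exact L.toContinuousLinearMap.hasFDerivAt.comp_hasDerivAt t (hasDerivAt_exp_smul_const' D t)

def IsCumulantSolution {ι : Type*} [Fintype ι] (D : Matrix ι ι ℝ) (c : ℝ) (u : ℝ → ι → ℝ) :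
    Prop :=
  ∀ t ≥ 0, HasDerivAt u (D *ᵥ u t - (c / 2) • (u t * u t)) t

section Cumulant

variable {ι : Type*} [Fintype ι] {D : Matrix ι ι ℝ} {c μ ξmin ξmax : ℝ} {ξ : ι → ℝ}
  {u : ℝ → ι → ℝ}

theorem IsCumulantSolution.le_smul_of_riccati (hu : IsCumulantSolution D c u) (hD : D.IsMetzler)
    (hc : 0 ≤ c) (heig : D *ᵥ ξ = μ • ξ) (hmin : ∀ i, ξmin ≤ ξ i) (hmin_pos : 0 < ξmin)
    {f : ℝ → ℝ} (hf : ∀ t ≥ 0, HasDerivAt f (μ * f t - c / 2 * ξmin * f t ^ 2) t)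
    (hf_nonneg : ∀ t ≥ 0, 0 ≤ f t) (h0 : u 0 ≤ f 0 • ξ) :
    ∀ t ≥ 0, u t ≤ f t • ξ := by
  refine hD.le_of_hasDerivAt hu (fun t ht => (hf t ht).smul_const ξ) h0 fun t ht i hi => ?_
  simp only [Pi.sub_apply, Pi.smul_apply, Pi.mul_apply, smul_eq_mul, mulVec_smul, heig] at hi ⊢
  have hξi : 0 ≤ ξ i := (hmin_pos.trans_le (hmin i)).le
  have hfξ : 0 ≤ f t * ξ i := mul_nonneg (hf_nonneg t ht) hξi
  have hsq : ξmin * f t ^ 2 * ξ i ≤ u t i * u t i :=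
    calc ξmin * f t ^ 2 * ξ i ≤ (f t * ξ i) * (f t * ξ i) := by
          nlinarith [mul_le_mul_of_nonneg_right (hmin i) (mul_nonneg (sq_nonneg (f t)) hξi)]
      _ ≤ u t i * u t i := mul_self_le_mul_self hfξ hi
  nlinarith [mul_le_mul_of_nonneg_left hsq (by positivity : (0:ℝ) ≤ c / 2)]

theorem IsCumulantSolution.smul_exp_mulVec_le [DecidableEq ι] (hu : IsCumulantSolution D c u)
    (hD : D.IsMetzler) (hc : 0 ≤ c) (hmax : ∀ i, ξ i ≤ ξmax) (hu_nonneg : ∀ t ≥ 0, 0 ≤ u t)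
    {f h : ℝ → ℝ} (hf_nonneg : ∀ t ≥ 0, 0 ≤ f t) (hub : ∀ t ≥ 0, u t ≤ f t • ξ)
    (hh : ∀ t ≥ 0, HasDerivAt h (-(c / 2) * ξmax * f t * h t) t) (hh0 : h 0 = 1) :
    ∀ t ≥ 0, h t • (NormedSpace.exp (t • D) *ᵥ u 0) ≤ u t := by
  refine hD.le_of_hasDerivAt
    (fun t ht => (hh t ht).smul (hasDerivAt_exp_smul_mulVec D (u 0) t)) hu
    (by simp [hh0]) fun t ht i hi => ?_
  set z := NormedSpace.exp (t • D) *ᵥ u 0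
  simp only [Pi.sub_apply, Pi.add_apply, Pi.smul_apply, Pi.mul_apply, smul_eq_mul,
    mulVec_smul] at hi ⊢
  have hui := hu_nonneg t ht i
  have hfξ : u t i ≤ f t * ξmax :=
    (hub t ht i).trans (mul_le_mul_of_nonneg_left (hmax i) (hf_nonneg t ht))
  have hsq : u t i * u t i ≤ ξmax * f t * h t * z i := by
    nlinarith [mul_le_mul hfξ hi hui (hui.trans hfξ)]
  nlinarith [mul_le_mul_of_nonneg_left hsq (by positivity : (0:ℝ) ≤ c / 2)]

theorem IsCumulantSolution.rpow_smul_exp_mulVec_le [DecidableEq ι]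
    (hu : IsCumulantSolution D c u) (hD : D.IsMetzler) (hc : 0 ≤ c) (heig : D *ᵥ ξ = μ • ξ)
    (hmin : ∀ i, ξmin ≤ ξ i) (hmin_pos : 0 < ξmin) (hmax : ∀ i, ξ i ≤ ξmax)
    (hu_nonneg : ∀ t ≥ 0, 0 ≤ u t) {C₀ : ℝ} (hC₀ : 0 ≤ C₀) (h0 : u 0 ≤ C₀ • ξ) {E : ℝ → ℝ}
    (hE : ∀ t, HasDerivAt E (Real.exp (μ * t)) t) (hE0 : E 0 = 0) :
    ∀ t ≥ 0, (1 + c * ξmin / 2 * C₀ * E t) ^ (-(ξmax / ξmin)) •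
      (NormedSpace.exp (t • D) *ᵥ u 0) ≤ u t := by
  set a := c * ξmin / 2 * C₀
  set g : ℝ → ℝ := fun t => 1 + a * E t
  set f : ℝ → ℝ := fun t => C₀ * Real.exp (μ * t) / g t
  have hg_pos : ∀ t ≥ 0, 0 < g t := fun t ht => by
    have hEt : E 0 ≤ E t := monotone_of_hasDerivAt_nonneg hE (fun t => (Real.exp_pos _).le) ht
    have : 0 ≤ a * E t := mul_nonneg (by positivity) (hE0 ▸ hEt)
    simp only [g]; linarith
  have hg : ∀ t, HasDerivAt g (a * Real.exp (μ * t)) t := fun t => ((hE t).const_mul a).const_add 1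
  have hf : ∀ t ≥ 0, HasDerivAt f (μ * f t - c / 2 * ξmin * f t ^ 2) t := fun t ht => by
    have hexp : HasDerivAt (fun t => Real.exp (μ * t)) (Real.exp (μ * t) * (μ * 1)) t :=
      ((hasDerivAt_id t).const_mul μ).exp
    refine ((hexp.const_mul C₀).div (hg t) (hg_pos t ht).ne').congr_deriv ?_
    have hgt := (hg_pos t ht).ne'
    simp only [f, a]
    field_simp
  have hf_nonneg : ∀ t ≥ 0, 0 ≤ f t := fun t ht => by positivity [hg_pos t ht]
  have hub := hu.le_smul_of_riccati hD hc heig hmin hmin_pos hf hf_nonneg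
    (by simpa [f, g, hE0] using h0)
  refine hu.smul_exp_mulVec_le hD hc hmax hu_nonneg hf_nonneg hub (fun t ht => ?_) (by simp [hE0])
  have hgt := (hg_pos t ht).ne'
  convert (hg t).rpow_const (p := -(ξmax / ξmin)) (Or.inl hgt) using 1
  rw [Real.rpow_sub_one hgt]
  simp only [f, g, a]
  field_simp

end Cumulant

theorem stmt4_general (k : ℕ) (c : ℝ) (hc : 0 < c)
    (D : Matrix (Fin k) (Fin k) ℝ)
    (hMetzler : ∀ i j : Fin k, i ≠ j → 0 ≤ D i j)
    (μ : ℝ) (ξ : Fin k → ℝ) (hξpos : ∀ i, 0 < ξ i)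
    (heig : D.mulVec ξ = μ • ξ)
    (lam : Fin k → ℝ) (hlam : ∀ i, 0 ≤ lam i)
    (u : ℝ → Fin k → ℝ)
    (hsol : ∀ t ∈ Set.Ici (0 : ℝ),
      HasDerivAt u (D.mulVec (u t) - (c / 2) • (u t * u t)) t)
    (hnonneg : ∀ t ∈ Set.Ici (0 : ℝ), ∀ i : Fin k, 0 ≤ u t i)
    (hinit : u 0 = lam)
    (C₀ ξmin ξmax : ℝ) (hC₀ : C₀ = ⨆ i, lam i / ξ i)
    (hξmin : ξmin = ⨅ i, ξ i) (hξmax : ξmax = ⨆ i, ξ i) :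
    (μ = 0 →
      ∀ t ≥ (0 : ℝ), ∀ i : Fin k,
        (1 + c * ξmin / 2 * C₀ * t) ^ (-(ξmax / ξmin)) *
          ((NormedSpace.exp (t • D)).mulVec lam) i ≤ u t i) ∧
    (μ < 0 →
      ∀ t ≥ (0 : ℝ), ∀ i : Fin k,
        (1 + c * ξmin / (2 * |μ|) * C₀ * (1 - Real.exp (μ * t))) ^ (-(ξmax / ξmin)) *
          ((NormedSpace.exp (t • D)).mulVec lam) i ≤ u t i) := by
  rcases isEmpty_or_nonempty (Fin k) with hk | hk
  · exact ⟨fun _ _ _ i => isEmptyElim i, fun _ _ _ i => isEmptyElim i⟩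
  have hmin : ∀ i, ξmin ≤ ξ i := fun i => hξmin ▸ ciInf_le (Finite.bddBelow_range ξ) i
  have hmax : ∀ i, ξ i ≤ ξmax := fun i => hξmax ▸ le_ciSup (Finite.bddAbove_range ξ) i
  have hmin_pos : 0 < ξmin := by
    obtain ⟨j, hj⟩ := exists_eq_ciInf_of_finite (f := ξ)
    exact hξmin ▸ hj ▸ hξpos j
  have hlamC : ∀ i, lam i / ξ i ≤ C₀ := fun i =>
    hC₀ ▸ le_ciSup (Finite.bddAbove_range fun i => lam i / ξ i) i
  have hC₀_nonneg : 0 ≤ C₀ := (div_nonneg (hlam hk.some) (hξpos hk.some).le).trans (hlamC hk.some)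
  have hlam_le : u 0 ≤ C₀ • ξ := hinit ▸ fun i => (div_le_iff₀ (hξpos i)).1 (hlamC i)
  have key := fun E => IsCumulantSolution.rpow_smul_exp_mulVec_le (E := E) hsol hMetzler hc.le
    heig hmin hmin_pos hmax hnonneg hC₀_nonneg hlam_le
  simp only [hinit] at key
  refine ⟨?_, fun hμ t ht i => ?_⟩
  · rintro rfl t ht i
    exact key id (fun t => by simpa using hasDerivAt_id t) rfl t ht i
  · have hE : ∀ t, HasDerivAt (fun t => (1 - Real.exp (μ * t)) / |μ|) (Real.exp (μ * t)) t := by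
      intro t
      refine ((((hasDerivAt_id t).const_mul μ).exp.const_sub 1).div_const |μ|).congr_deriv ?_
      simp [abs_of_neg hμ, hμ.ne]
    rw [show c * ξmin / (2 * |μ|) * C₀ * (1 - Real.exp (μ * t)) =
      c * ξmin / 2 * C₀ * ((1 - Real.exp (μ * t)) / |μ|) by ring]
    exact key _ hE (by simp) t ht i

/-- (Lemma 2.3 (iv) of the paper.) Lower bound on a nonnegative solution
of the cumulant system in terms of the matrix exponential `e^{Dt} λ`, in the critical
(`μ = 0`) and subcritical (`μ < 0`) cases. Here `ξ̲ = min_i ξ_i`, `ξ̄ = max_i ξ_i` and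
`C_0 = max_i λ_i / ξ_i`. -/
theorem stmt4 (k : ℕ) (hk : 1 ≤ k) (c : ℝ) (hc : 0 < c)
    (D : Matrix (Fin k) (Fin k) ℝ)
    (hMetzler : ∀ i j : Fin k, i ≠ j → 0 ≤ D i j)
    (μ : ℝ) (hμ : μ ≤ 0) (ξ : Fin k → ℝ) (hξpos : ∀ i, 0 < ξ i)
    (heig : D.mulVec ξ = μ • ξ)
    (lam : Fin k → ℝ) (hlam : ∀ i, 0 ≤ lam i)
    (u : ℝ → Fin k → ℝ)
    (hsol : ∀ t ∈ Set.Ici (0 : ℝ),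
      HasDerivAt u (D.mulVec (u t) - (c / 2) • (u t * u t)) t)
    (hnonneg : ∀ t ∈ Set.Ici (0 : ℝ), ∀ i : Fin k, 0 ≤ u t i)
    (hinit : u 0 = lam)
    (C₀ ξmin ξmax : ℝ) (hC₀ : C₀ = ⨆ i, lam i / ξ i)
    (hξmin : ξmin = ⨅ i, ξ i) (hξmax : ξmax = ⨆ i, ξ i) :
    (μ = 0 →
      ∀ t ≥ (0 : ℝ), ∀ i : Fin k,
        (1 + c * ξmin / 2 * C₀ * t) ^ (-(ξmax / ξmin)) *
          ((NormedSpace.exp (t • D)).mulVec lam) i ≤ u t i) ∧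
    (μ < 0 →
      ∀ t ≥ (0 : ℝ), ∀ i : Fin k,
        (1 + c * ξmin / (2 * |μ|) * C₀ * (1 - Real.exp (μ * t))) ^ (-(ξmax / ξmin)) *
          ((NormedSpace.exp (t • D)).mulVec lam) i ≤ u t i) :=
  stmt4_general k c hc D hMetzler μ ξ hξpos heig lam hlam u hsol hnonneg hinit C₀ ξmin ξmax hC₀
    hξmin hξmax
end

section
/- Let D be a k×k Metzler matrix, c > 0, μ < 0, and ξ ∈ ℝ^k a positive right eigenvector of D with D ξ = μ ξ; set ξ̄ = max_i ξ_i. Let u : [0,∞) → ℝ^k be a nonnegative solution of the cumulant system with u_0 = λ ∈ ℝ^k, λ ≥ 0, and C_0 = max_i λ_i/ξ_i. Then for all t ≥ 0, componentwise: u_t ≤ e^{Dt} λ and e^{Dt} λ − u_t ≤ (c ξ̄ / (2|μ|)) C_0 (1 − e^{μ t}) · e^{Dt} λ, where e^{Dt} is the matrix exponential. -/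
/-!
Fix `t ≥ 0` and consider `φ(s) = e^{(t-s)D} u_s` on `[0, t]`, so that `φ(0) = e^{tD} λ` and
`φ(t) = u_t`. By the cumulant equation `φ'(s) = -(c/2) e^{(t-s)D} (u_s ⊙ u_s)`, and `e^{rD}` is
entrywise nonnegative for `r ≥ 0` because `D` is Metzler: `D + αI` is nonnegative for large `α`,
and `e^{D} = e^{-α} e^{D + αI}`. Hence `φ` is nonincreasing, which is the first inequality. Feeding it back, `u_s ≤ e^{sD} λ ≤ C₀ e^{sD} ξ = C₀ e^{μs} ξ ≤ C₀ ξ̄ e^{μs}`, so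
`e^{(t-s)D} (u_s ⊙ u_s) ≤ C₀ ξ̄ e^{μs} e^{(t-s)D} u_s ≤ C₀ ξ̄ e^{μs} e^{tD} λ`; integrating this
lower bound on `φ'` over `[0, t]` gives the second inequality.
-/

open Set

namespace Matrix

section Order

variable {m n α : Type*} [Fintype n] [Semiring α] [PartialOrder α] [IsOrderedRing α]

lemma mulVec_mono_of_apply_nonneg {A : Matrix m n α} (hA : ∀ i j, 0 ≤ A i j) {x y : n → α}
    (h : x ≤ y) : A *ᵥ x ≤ A *ᵥ y :=
  fun i => Finset.sum_le_sum fun j _ => mul_le_mul_of_nonneg_left (h j) (hA i j)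

lemma mulVec_nonneg_of_apply_nonneg {A : Matrix m n α} (hA : ∀ i j, 0 ≤ A i j) {x : n → α}
    (hx : 0 ≤ x) : 0 ≤ A *ᵥ x := by
  simpa using mulVec_mono_of_apply_nonneg hA hx

end Order

variable {n : Type*} [Fintype n] [DecidableEq n]

lemma exp_apply_nonneg {A : Matrix n n ℝ} (hA : ∀ i j, 0 ≤ A i j) (i j : n) :
    0 ≤ NormedSpace.exp A i j := by
  open scoped Norms.Operator in
  have hsum := Pi.hasSum.1 (Pi.hasSum.1 (NormedSpace.exp_series_hasSum_exp' (𝕂 := ℝ) A) i) j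
  exact hsum.nonneg fun m => mul_nonneg (by positivity) (pow_apply_nonneg hA m i j)

lemma exp_add_algebraMap (A : Matrix n n ℝ) (r : ℝ) :
    NormedSpace.exp (A + algebraMap ℝ _ r) = Real.exp r • NormedSpace.exp A := by
  rw [exp_add_of_commute _ _ (Algebra.commutes r A).symm, algebraMap_eq_diagonal, exp_diagonal]
  ext i j
  simp [Real.exp_eq_exp_ℝ, mul_comm]

lemma exp_apply_nonneg_of_offDiag_nonneg {D : Matrix n n ℝ} (hD : ∀ i j, i ≠ j → 0 ≤ D i j)
    (i j : n) : 0 ≤ NormedSpace.exp D i j := by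
  set α := ∑ l, |D l l|
  have hshift : ∀ p q, 0 ≤ (D + algebraMap ℝ _ α) p q := by
    intro p q
    rcases eq_or_ne p q with rfl | hpq
    · have : |D p p| ≤ α :=
        Finset.single_le_sum (fun l _ => abs_nonneg (D l l)) (Finset.mem_univ p)
      simp only [add_apply, algebraMap_matrix_apply, if_true, Algebra.algebraMap_self,
        RingHom.id_apply]
      linarith [neg_abs_le (D p p)]
    · simpa [algebraMap_matrix_apply, hpq] using hD p q hpq
  have hD_eq : D = (D + algebraMap ℝ _ α) + algebraMap ℝ _ (-α) := by
    rw [map_neg, add_neg_cancel_right]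
  rw [hD_eq, exp_add_algebraMap, smul_apply, smul_eq_mul]
  exact mul_nonneg (Real.exp_pos _).le (exp_apply_nonneg hshift i j)

lemma exp_smul_apply_nonneg_of_offDiag_nonneg {D : Matrix n n ℝ}
    (hD : ∀ i j, i ≠ j → 0 ≤ D i j) {t : ℝ} (ht : 0 ≤ t) (i j : n) :
    0 ≤ NormedSpace.exp (t • D) i j :=
  exp_apply_nonneg_of_offDiag_nonneg (fun i j hij => mul_nonneg ht (hD i j hij)) i j

lemma exp_mulVec_of_mulVec_eq_smul {A : Matrix n n ℝ} {μ : ℝ} {v : n → ℝ} (h : A *ᵥ v = μ • v) :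
    NormedSpace.exp A *ᵥ v = Real.exp μ • v := by
  have hpow (m : ℕ) : A ^ m *ᵥ v = μ ^ m • v := by
    induction m with
    | zero => simp
    | succ m ih => rw [pow_succ', ← mulVec_mulVec, ih, mulVec_smul, h, smul_smul, pow_succ]
  open scoped Norms.Operator in
  have hA := (NormedSpace.exp_series_hasSum_exp' (𝕂 := ℝ) A).map
    (mulVec.addMonoidHomLeft v) (continuous_id.matrix_mulVec continuous_const)
  have hμ := (NormedSpace.exp_series_hasSum_exp' (𝕂 := ℝ) μ).smul_const v
  rw [← Real.exp_eq_exp_ℝ] at hμ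
  refine hA.unique (hμ.congr_fun fun m => ?_)
  simp [mulVec.addMonoidHomLeft, smul_mulVec, hpow, smul_smul]

lemma exp_smul_mul_exp_smul (D : Matrix n n ℝ) (s t : ℝ) :
    NormedSpace.exp (s • D) * NormedSpace.exp (t • D) = NormedSpace.exp ((s + t) • D) := by
  rw [add_smul, exp_add_of_commute _ _ (((Commute.refl D).smul_left s).smul_right t)]

lemma exp_sub_smul_mulVec_exp_smul_mulVec (D : Matrix n n ℝ) (s t : ℝ) (v : n → ℝ) :
    NormedSpace.exp ((t - s) • D) *ᵥ (NormedSpace.exp (s • D) *ᵥ v) =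
      NormedSpace.exp (t • D) *ᵥ v := by
  rw [mulVec_mulVec, exp_smul_mul_exp_smul, sub_add_cancel]

lemma hasDerivAt_exp_smul_apply (D : Matrix n n ℝ) (t : ℝ) (i j : n) :
    HasDerivAt (fun s => NormedSpace.exp (s • D) i j) ((NormedSpace.exp (t • D) * D) i j) t := by
  open scoped Norms.Operator in
  exact (entryLinearMap ℝ ℝ i j).toContinuousLinearMap.hasFDerivAt.comp_hasDerivAt t
    (hasDerivAt_exp_smul_const D t)

lemma hasDerivAt_exp_sub_smul_mulVec (D : Matrix n n ℝ) (a : ℝ) {u : ℝ → n → ℝ} {u' : n → ℝ}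
    {s : ℝ} (hu : HasDerivAt u u' s) :
    HasDerivAt (fun r => NormedSpace.exp ((a - r) • D) *ᵥ u r)
      (NormedSpace.exp ((a - s) • D) *ᵥ (u' - D *ᵥ u s)) s := by
  refine hasDerivAt_pi.2 fun i => ?_
  have hE (j : n) : HasDerivAt (fun r => NormedSpace.exp ((a - r) • D) i j)
      (-((NormedSpace.exp ((a - s) • D) * D) i j)) s := by
    simpa [Function.comp_def] using
      (hasDerivAt_exp_smul_apply D (a - s) i j).comp s ((hasDerivAt_id s).const_sub a)
  refine (HasDerivAt.fun_sum fun j _ => (hE j).mul (hasDerivAt_pi.1 hu j)).congr_deriv ?_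
  rw [mulVec_sub, mulVec_mulVec]
  simp only [Pi.sub_apply, mulVec, dotProduct, Finset.sum_add_distrib, neg_mul,
    Finset.sum_neg_distrib]
  ring

end Matrix

lemma sub_le_sub_of_hasDerivAt_le {f g f' g' : ℝ → ℝ} {a b : ℝ} (hab : a ≤ b)
    (hf : ∀ x ∈ Icc a b, HasDerivAt f (f' x) x) (hg : ∀ x ∈ Icc a b, HasDerivAt g (g' x) x)
    (hle : ∀ x ∈ Ioo a b, f' x ≤ g' x) : f b - f a ≤ g b - g a := by
  have hmono : MonotoneOn (fun x => g x - f x) (Icc a b) := by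
    refine monotoneOn_of_hasDerivWithinAt_nonneg (f' := fun x => g' x - f' x) (convex_Icc a b)
      (fun x hx => ((hg x hx).sub (hf x hx)).continuousAt.continuousWithinAt) ?_ ?_
    · rw [interior_Icc]
      exact fun x hx => ((hg x (Ioo_subset_Icc_self hx)).sub
        (hf x (Ioo_subset_Icc_self hx))).hasDerivWithinAt
    · rw [interior_Icc]
      exact fun x hx => sub_nonneg.2 (hle x hx)
  have := hmono (left_mem_Icc.2 hab) (right_mem_Icc.2 hab) hab
  linarith

section CumulantSystem

open Matrix

variable {n : Type*} [Fintype n] [DecidableEq n] {c : ℝ} {D : Matrix n n ℝ} {u : ℝ → n → ℝ}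

lemma hasDerivAt_exp_sub_smul_mulVec_cumulant
    (hsol : ∀ t ∈ Ici (0 : ℝ), HasDerivAt u (D *ᵥ u t - (c / 2) • (u t * u t)) t)
    (t : ℝ) {s : ℝ} (hs : 0 ≤ s) (i : n) :
    HasDerivAt (fun r => (NormedSpace.exp ((t - r) • D) *ᵥ u r) i)
      (-(c / 2 * (NormedSpace.exp ((t - s) • D) *ᵥ (u s * u s)) i)) s := by
  have h := hasDerivAt_pi.1 (hasDerivAt_exp_sub_smul_mulVec D t (hsol s hs)) i
  rwa [sub_sub_cancel_left, mulVec_neg, mulVec_smul, Pi.neg_apply, Pi.smul_apply,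
    smul_eq_mul] at h

variable (hc : 0 ≤ c) (hD : ∀ i j, i ≠ j → 0 ≤ D i j)
  (hsol : ∀ t ∈ Ici (0 : ℝ), HasDerivAt u (D *ᵥ u t - (c / 2) • (u t * u t)) t)
  (hnonneg : ∀ t ∈ Ici (0 : ℝ), 0 ≤ u t)
include hc hD hsol hnonneg

lemma cumulant_le_exp_smul_mulVec {t : ℝ} (ht : 0 ≤ t) :
    u t ≤ NormedSpace.exp (t • D) *ᵥ u 0 := by
  intro i
  have h := sub_le_sub_of_hasDerivAt_le (g := fun _ => 0) (g' := fun _ => 0) ht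
    (fun s hs => hasDerivAt_exp_sub_smul_mulVec_cumulant hsol t hs.1 i)
    (fun s _ => hasDerivAt_const s 0) fun s hs => by
      have hts : 0 ≤ t - s := by linarith [hs.2]
      have := mulVec_nonneg_of_apply_nonneg (exp_smul_apply_nonneg_of_offDiag_nonneg hD hts)
        (mul_nonneg (hnonneg s hs.1.le) (hnonneg s hs.1.le)) i
      exact neg_nonpos.2 (mul_nonneg (by linarith) this)
  simpa using h

lemma cumulant_le_smul_eigenvector {μ C₀ : ℝ} {ξ : n → ℝ} (hξ : D *ᵥ ξ = μ • ξ)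
    (hu₀ : u 0 ≤ C₀ • ξ) {s : ℝ} (hs : 0 ≤ s) : u s ≤ (C₀ * Real.exp (μ * s)) • ξ := by
  calc u s ≤ NormedSpace.exp (s • D) *ᵥ u 0 := cumulant_le_exp_smul_mulVec hc hD hsol hnonneg hs
    _ ≤ NormedSpace.exp (s • D) *ᵥ (C₀ • ξ) :=
      mulVec_mono_of_apply_nonneg (exp_smul_apply_nonneg_of_offDiag_nonneg hD hs) hu₀
    _ = (C₀ * Real.exp (μ * s)) • ξ := by
      have hsξ : (s • D) *ᵥ ξ = (s * μ) • ξ := by rw [smul_mulVec, hξ, smul_smul]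
      rw [mulVec_smul, exp_mulVec_of_mulVec_eq_smul hsξ, smul_smul, mul_comm s μ]

variable {μ C₀ ξmax : ℝ} {ξ : n → ℝ} (hξ : D *ᵥ ξ = μ • ξ) (hC₀ : 0 ≤ C₀)
  (hu₀ : u 0 ≤ C₀ • ξ) (hξmax : ∀ j, ξ j ≤ ξmax)
include hξ hC₀ hu₀ hξmax

lemma cumulant_apply_le {s : ℝ} (hs : 0 ≤ s) (j : n) : u s j ≤ C₀ * Real.exp (μ * s) * ξmax := by
  have hj := cumulant_le_smul_eigenvector hc hD hsol hnonneg hξ hu₀ hs j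
  rw [Pi.smul_apply, smul_eq_mul] at hj
  exact hj.trans (mul_le_mul_of_nonneg_left (hξmax j) (by positivity))

lemma exp_sub_smul_mulVec_cumulant_sq_le {s t : ℝ} (hs : 0 ≤ s) (hst : s ≤ t) (i : n) :
    (NormedSpace.exp ((t - s) • D) *ᵥ (u s * u s)) i ≤
      C₀ * Real.exp (μ * s) * ξmax * (NormedSpace.exp (t • D) *ᵥ u 0) i := by
  have hu_le := cumulant_apply_le hc hD hsol hnonneg hξ hC₀ hu₀ hξmax hs
  have hE := exp_smul_apply_nonneg_of_offDiag_nonneg hD (sub_nonneg.2 hst)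
  calc (NormedSpace.exp ((t - s) • D) *ᵥ (u s * u s)) i
      ≤ (NormedSpace.exp ((t - s) • D) *ᵥ ((C₀ * Real.exp (μ * s) * ξmax) • u s)) i :=
        mulVec_mono_of_apply_nonneg hE
          (fun j => mul_le_mul_of_nonneg_right (hu_le j) (hnonneg s hs j)) i
    _ = C₀ * Real.exp (μ * s) * ξmax * (NormedSpace.exp ((t - s) • D) *ᵥ u s) i := by
        rw [mulVec_smul, Pi.smul_apply, smul_eq_mul]
    _ ≤ C₀ * Real.exp (μ * s) * ξmax *
          (NormedSpace.exp ((t - s) • D) *ᵥ (NormedSpace.exp (s • D) *ᵥ u 0)) i :=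
        mul_le_mul_of_nonneg_left (mulVec_mono_of_apply_nonneg hE
          (cumulant_le_exp_smul_mulVec hc hD hsol hnonneg hs) i)
          ((hnonneg s hs i).trans (hu_le i))
    _ = C₀ * Real.exp (μ * s) * ξmax * (NormedSpace.exp (t • D) *ᵥ u 0) i := by
        rw [exp_sub_smul_mulVec_exp_smul_mulVec]

lemma exp_smul_mulVec_sub_cumulant_le (hμ : μ ≠ 0) {t : ℝ} (ht : 0 ≤ t) (i : n) :
    (NormedSpace.exp (t • D) *ᵥ u 0) i - u t i ≤
      c / 2 * C₀ * ξmax * ((Real.exp (μ * t) - 1) / μ) * (NormedSpace.exp (t • D) *ᵥ u 0) i := by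
  set V := (NormedSpace.exp (t • D) *ᵥ u 0) i
  set K := c / 2 * C₀ * ξmax * V with hK
  have hG (s : ℝ) : HasDerivAt (fun r => K * Real.exp (μ * r) / μ) (K * Real.exp (μ * s)) s := by
    refine ((((hasDerivAt_id s).const_mul μ).exp.const_mul K).div_const μ).congr_deriv ?_
    simp only [id, mul_one]
    field_simp
  have h := sub_le_sub_of_hasDerivAt_le ht
    (fun s hs => (hasDerivAt_exp_sub_smul_mulVec_cumulant hsol t hs.1 i).neg)
    (fun s _ => hG s) fun s hs => by
      have := mul_le_mul_of_nonneg_left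
        (exp_sub_smul_mulVec_cumulant_sq_le hc hD hsol hnonneg hξ hC₀ hu₀ hξmax hs.1.le hs.2.le i)
        (by linarith : 0 ≤ c / 2)
      rw [neg_neg, hK]
      linarith
  simp only [sub_self, zero_smul, NormedSpace.exp_zero, one_mulVec, sub_zero, mul_zero,
    Real.exp_zero, Pi.neg_apply, neg_sub_neg] at h
  calc V - u t i ≤ K * Real.exp (μ * t) / μ - K * 1 / μ := h
    _ = _ := by ring

end CumulantSystem

theorem stmt5_general (k : ℕ) (c : ℝ) (hc : 0 < c)
    (D : Matrix (Fin k) (Fin k) ℝ)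
    (hMetzler : ∀ i j : Fin k, i ≠ j → 0 ≤ D i j)
    (μ : ℝ) (hμ : μ < 0) (ξ : Fin k → ℝ) (hξpos : ∀ i, 0 < ξ i)
    (heig : D.mulVec ξ = μ • ξ)
    (lam : Fin k → ℝ)
    (u : ℝ → Fin k → ℝ)
    (hsol : ∀ t ∈ Set.Ici (0 : ℝ),
      HasDerivAt u (D.mulVec (u t) - (c / 2) • (u t * u t)) t)
    (hnonneg : ∀ t ∈ Set.Ici (0 : ℝ), ∀ i : Fin k, 0 ≤ u t i)
    (hinit : u 0 = lam)
    (C₀ ξmax : ℝ) (hC₀ : C₀ = ⨆ i, lam i / ξ i) (hξmax : ξmax = ⨆ i, ξ i) :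
    ∀ t ≥ (0 : ℝ), ∀ i : Fin k,
      u t i ≤ ((NormedSpace.exp (t • D)).mulVec lam) i ∧
      ((NormedSpace.exp (t • D)).mulVec lam) i - u t i ≤
        c * ξmax / (2 * |μ|) * C₀ * (1 - Real.exp (μ * t)) *
          ((NormedSpace.exp (t • D)).mulVec lam) i := by
  intro t ht i
  subst hinit
  have hlam_le (j : Fin k) : u 0 j ≤ C₀ * ξ j := by
    rw [← div_le_iff₀ (hξpos j), hC₀]
    exact le_ciSup (Set.finite_range fun j => u 0 j / ξ j).bddAbove j
  have hC₀_nonneg : 0 ≤ C₀ :=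
    nonneg_of_mul_nonneg_left ((hnonneg 0 self_mem_Ici i).trans (hlam_le i)) (hξpos i)
  have hξ_le (j : Fin k) : ξ j ≤ ξmax := hξmax ▸ le_ciSup (Set.finite_range ξ).bddAbove j
  refine ⟨cumulant_le_exp_smul_mulVec hc.le hMetzler hsol hnonneg ht i, ?_⟩
  convert exp_smul_mulVec_sub_cumulant_le hc.le hMetzler hsol hnonneg heig hC₀_nonneg hlam_le hξ_le
    hμ.ne ht i using 1
  rw [abs_of_neg hμ]
  field_simp
  ring

/-- (Inequality (2.13) of the paper, subcritical case.) For a nonnegative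
solution of the cumulant system with `μ < 0`, one has componentwise
`u_t ≤ e^{Dt} λ` and `e^{Dt} λ − u_t ≤ (c ξ̄ / (2|μ|)) C₀ (1 − e^{μt}) e^{Dt} λ`. -/
theorem stmt5 (k : ℕ) (hk : 1 ≤ k) (c : ℝ) (hc : 0 < c)
    (D : Matrix (Fin k) (Fin k) ℝ)
    (hMetzler : ∀ i j : Fin k, i ≠ j → 0 ≤ D i j)
    (μ : ℝ) (hμ : μ < 0) (ξ : Fin k → ℝ) (hξpos : ∀ i, 0 < ξ i)
    (heig : D.mulVec ξ = μ • ξ)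
    (lam : Fin k → ℝ) (hlam : ∀ i, 0 ≤ lam i)
    (u : ℝ → Fin k → ℝ)
    (hsol : ∀ t ∈ Set.Ici (0 : ℝ),
      HasDerivAt u (D.mulVec (u t) - (c / 2) • (u t * u t)) t)
    (hnonneg : ∀ t ∈ Set.Ici (0 : ℝ), ∀ i : Fin k, 0 ≤ u t i)
    (hinit : u 0 = lam)
    (C₀ ξmax : ℝ) (hC₀ : C₀ = ⨆ i, lam i / ξ i) (hξmax : ξmax = ⨆ i, ξ i) :
    ∀ t ≥ (0 : ℝ), ∀ i : Fin k,
      u t i ≤ ((NormedSpace.exp (t • D)).mulVec lam) i ∧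
      ((NormedSpace.exp (t • D)).mulVec lam) i - u t i ≤
        c * ξmax / (2 * |μ|) * C₀ * (1 - Real.exp (μ * t)) *
          ((NormedSpace.exp (t • D)).mulVec lam) i :=
  stmt5_general k c hc D hMetzler μ hμ ξ hξpos heig lam u hsol hnonneg hinit C₀ ξmax hC₀ hξmax
end

section
/- Let D be an irreducible k×k Metzler matrix, c > 0, and ξ ∈ ℝ^k a positive right eigenvector of D with D ξ = 0 (critical case μ = 0). Let u : [0,∞) → ℝ^k be a nonnegative solution of the cumulant system with u_0 = λ, where λ ≥ 0 and λ ≠ 0, and let v : [0,∞) → ℝ^k be a differentiable solution of the linearized system dv_t/dt = D v_t − c · u_t ⊙ v_t with v_0 = ξ. Then v_t → 0 as t → ∞. -/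
open Filter Topology Set Matrix

/-!
At an index where `w i / ξ i` is maximal, the Metzler condition and `D ξ = 0` give `(D w) i ≤ 0`.
Hence a bound `w ≤ B • ξ` propagates along `w' = D w + F` as soon as `F` respects it at the
touching indices. Irreducibility makes `u` eventually positive, `u T ≥ δ ξ`; comparison with the
Riccati equation `m' = -(c/2) (max ξ) m²` then gives `u t ≥ δ / (1 + γ (t - T)) • ξ`, so the
linearized system is damped at rate at least `κ / (1 + γ (t - T))`, and
`|v t| ≤ (1 + γ (t - T)) ^ (-κ/γ) • ξ → 0`.
-/

namespace Matrix

variable {n : Type*} [Fintype n]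

def IsMetzler_s9 (D : Matrix n n ℝ) : Prop := ∀ i j, i ≠ j → 0 ≤ D i j

variable {D : Matrix n n ℝ}

theorem IsMetzler_s9.mulVec_apply_nonpos (hD : D.IsMetzler_s9) {y : n → ℝ} {i : n} (hy : y ≤ 0)
    (hyi : y i = 0) : (D *ᵥ y) i ≤ 0 := by
  refine Finset.sum_nonpos fun j _ => ?_
  rcases eq_or_ne i j with rfl | hij
  · simp [hyi]
  · exact mul_nonpos_of_nonneg_of_nonpos (hD i j hij) (hy j)

theorem IsMetzler_s9.mulVec_apply_nonpos_of_le_smul (hD : D.IsMetzler_s9) {ξ : n → ℝ}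
    (hDξ : D *ᵥ ξ = 0) {w : n → ℝ} {q : ℝ} {i : n} (hw : w ≤ q • ξ) (hwi : w i = q * ξ i) :
    (D *ᵥ w) i ≤ 0 := by
  have hshift : D *ᵥ w = D *ᵥ (w - q • ξ) := by
    rw [mulVec_sub, mulVec_smul, hDξ, smul_zero, sub_zero]
  rw [hshift]
  exact hD.mulVec_apply_nonpos (sub_nonpos.2 hw) (by simp [hwi])

theorem IsMetzler_s9.diag_mul_le_mulVec_apply (hD : D.IsMetzler_s9) {y : n → ℝ}
    (hy : 0 ≤ y) (i : n) : D i i * y i ≤ (D *ᵥ y) i := by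
  classical
  rw [mulVec, dotProduct, ← Finset.add_sum_erase _ _ (Finset.mem_univ i)]
  exact le_add_of_nonneg_right <| Finset.sum_nonneg fun j hj =>
    mul_nonneg (hD i j (Finset.ne_of_mem_erase hj).symm) (hy j)

theorem IsMetzler_s9.mul_le_mulVec_apply_of_apply_eq_zero (hD : D.IsMetzler_s9) {y : n → ℝ}
    (hy : 0 ≤ y) {i : n} (hyi : y i = 0) (j : n) : D i j * y j ≤ (D *ᵥ y) i := by
  refine Finset.single_le_sum (f := fun j => D i j * y j) (fun m _ => ?_) (Finset.mem_univ j)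
  rcases eq_or_ne i m with rfl | him
  · simp [hyi]
  · exact mul_nonneg (hD i m him) (hy m)

theorem finset_eq_univ_of_irreducible
    (hirr : ∀ J : Finset n, J.Nonempty → J ≠ Finset.univ → ∃ j ∈ J, ∃ i ∉ J, 0 < D j i)
    {S : Finset n} (hS : S.Nonempty) (hclosed : ∀ i ∈ S, ∀ j, 0 < D j i → j ∈ S) :
    S = Finset.univ := by
  classical
  by_contra hne
  obtain ⟨j, hj, i, hi, hji⟩ :=
    hirr Sᶜ (Finset.nonempty_iff_ne_empty.2 fun h => hne (Finset.compl_eq_empty_iff S |>.1 h))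
      ((Finset.compl_ne_univ_iff_nonempty S).2 hS)
  exact Finset.mem_compl.1 hj (hclosed i (by simpa using hi) j hji)

end Matrix

theorem forall_image_le_of_deriv_right_lt_deriv_boundary {ι : Type*} [Fintype ι]
    {f f' : ι → ℝ → ℝ} {a b : ℝ} (hf : ∀ i, ContinuousOn (f i) (Icc a b))
    (hf' : ∀ i, ∀ x ∈ Ico a b, HasDerivWithinAt (f i) (f' i x) (Ici x) x)
    {B B' : ℝ → ℝ} (ha : ∀ i, f i a ≤ B a) (hB : ContinuousOn B (Icc a b))
    (hB' : ∀ x ∈ Ico a b, HasDerivWithinAt B (B' x) (Ici x) x)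
    (bound : ∀ x ∈ Ico a b, ∀ i, f i x = B x → (∀ j, f j x ≤ B x) → f' i x < B' x) :
    ∀ ⦃x⦄, x ∈ Icc a b → ∀ i, f i x ≤ B x := by
  classical
  rcases isEmpty_or_nonempty ι with hι | hι
  · exact fun x _ i => isEmptyElim i
  set F : ℝ → ℝ := fun x => Finset.univ.sup' Finset.univ_nonempty (f · x)
  have hfF : ∀ i x, f i x ≤ F x := fun i x => Finset.le_sup' (f · x) (Finset.mem_univ i)
  -- bounds the right Dini derivative of `F`: only the indices attaining the maximum matter
  set F' : ℝ → ℝ := fun x => Finset.univ.sup' Finset.univ_nonempty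
    fun i => if f i x = F x then f' i x else B' x - 1
  suffices hFB : ∀ ⦃x⦄, x ∈ Icc a b → F x ≤ B x from
    fun x hx i => (hfF i x).trans (hFB hx)
  refine image_le_of_liminf_slope_right_lt_deriv_boundary' (f' := F')
    (ContinuousOn.finset_sup'_apply _ fun i _ => hf i) (fun x hx r hr => ?_)
    (Finset.sup'_le _ _ fun i _ => ha i) hB hB' fun x hx hFxB => ?_
  · have hnear : ∀ i, ∀ᶠ z in 𝓝[>] x, f i z < F x + r * (z - x) := by
      intro i
      rcases (hfF i x).lt_or_eq with hlt | heq
      · have hcont : ContinuousWithinAt (fun z => f i z - r * (z - x)) (Ioi x) x :=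
          ((hf' i x hx).continuousWithinAt.sub
            ((continuousWithinAt_id.sub continuousWithinAt_const).const_mul r)).mono
            Ioi_subset_Ici_self
        filter_upwards [hcont.eventually_lt_const (by simpa using hlt)] with z hz
        linarith
      · have hder : f' i x < r := lt_of_le_of_lt (by
          simpa [heq] using Finset.le_sup' (fun i => if f i x = F x then f' i x else B' x - 1)
            (Finset.mem_univ i)) hr
        have hslope := (hasDerivWithinAt_iff_tendsto_slope' (lt_irrefl x)).1
          ((hf' i x hx).mono Ioi_subset_Ici_self)
        filter_upwards [hslope.eventually (gt_mem_nhds hder), self_mem_nhdsWithin] with z hz hxz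
        rw [slope_def_field, div_lt_iff₀ (sub_pos.2 hxz)] at hz
        linarith
    refine (((eventually_all.2 hnear).and self_mem_nhdsWithin).mono fun z hz => ?_).frequently
    rw [slope_def_field, div_lt_iff₀ (sub_pos.2 hz.2)]
    have : F z < F x + r * (z - x) := (Finset.sup'_lt_iff _).2 fun i _ => hz.1 i
    linarith
  · refine (Finset.sup'_lt_iff _).2 fun i _ => ?_
    split_ifs with hi
    · exact bound x hx i (hi.trans hFxB) fun j => (hfF j x).trans hFxB.le
    · exact sub_one_lt _

theorem forall_image_le_of_deriv_right_le_deriv_boundary {ι : Type*} [Fintype ι]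
    {f f' : ι → ℝ → ℝ} {a b : ℝ} (hf : ∀ i, ContinuousOn (f i) (Icc a b))
    (hf' : ∀ i, ∀ x ∈ Ico a b, HasDerivWithinAt (f i) (f' i x) (Ici x) x)
    {B B' : ℝ → ℝ} (ha : ∀ i, f i a ≤ B a) (hB : ContinuousOn B (Icc a b))
    (hB' : ∀ x ∈ Ico a b, HasDerivWithinAt B (B' x) (Ici x) x)
    (bound : ∀ x ∈ Ico a b, ∀ i, B x ≤ f i x → (∀ j, f j x ≤ f i x) → f' i x ≤ B' x) :
    ∀ ⦃x⦄, x ∈ Icc a b → ∀ i, f i x ≤ B x := by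
  intro x hx i
  have hC : 0 < 1 + (x - a) := by linarith [hx.1]
  refine le_of_forall_pos_le_add fun ε hε => ?_
  set η := ε / (1 + (x - a))
  have hη : 0 < η := div_pos hε hC
  have hpert := forall_image_le_of_deriv_right_lt_deriv_boundary hf hf'
    (B := fun y => B y + η * (y - a)) (B' := fun y => B' y + η) (by simpa using ha)
    (hB.add (continuousOn_const.mul (continuousOn_id.sub continuousOn_const)))
    (fun y hy => by
      simpa only [mul_one] using (hB' y hy).fun_add
        ((hasDerivAt_id' (x := y)).sub_const a |>.const_mul η).hasDerivWithinAt)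
    (fun y hy j hj hmax => by
      have : 0 ≤ η * (y - a) := mul_nonneg hη.le (by linarith [hy.1])
      linarith [bound y hy j (by linarith) fun k => hj ▸ hmax k]) hx i
  have : η * (x - a) ≤ ε := by
    calc η * (x - a) ≤ η * (1 + (x - a)) := by gcongr; linarith
      _ = ε := div_mul_cancel₀ ε hC.ne'
  linarith

theorem pos_of_hasDerivAt_of_neg_mul_le {y y' : ℝ → ℝ} {K s t : ℝ} (hst : s ≤ t)
    (hy : ∀ x ∈ Icc s t, HasDerivAt y (y' x) x) (hK : ∀ x ∈ Icc s t, -K * y x ≤ y' x)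
    (hs : 0 < y s) : 0 < y t := by
  have hder : ∀ x ∈ Icc s t, HasDerivAt (fun x => Real.exp (K * x) * y x)
      (Real.exp (K * x) * (K * y x + y' x)) x := fun x hx =>
    (((hasDerivAt_id' (x := x)).const_mul K).exp.fun_mul (hy x hx)).congr_deriv (by ring)
  have hmono : MonotoneOn (fun x => Real.exp (K * x) * y x) (Icc s t) :=
    monotoneOn_of_hasDerivWithinAt_nonneg (convex_Icc s t)
      (fun x hx => (hder x hx).continuousAt.continuousWithinAt)
      (fun x hx => (hder x (interior_subset hx)).hasDerivWithinAt)
      (fun x hx => mul_nonneg (Real.exp_pos _).le (by linarith [hK x (interior_subset hx)]))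
  exact pos_of_mul_pos_right ((mul_pos (Real.exp_pos _) hs).trans_le
    (hmono (left_mem_Icc.2 hst) (right_mem_Icc.2 hst) hst)) (Real.exp_pos _).le

section MetzlerSystem

variable {n : Type*} [Fintype n] {D : Matrix n n ℝ} {ξ : n → ℝ}

theorem le_smul_of_hasDerivAt_mulVec_add (hD : D.IsMetzler_s9) (hξ : ∀ i, 0 < ξ i)
    (hDξ : D *ᵥ ξ = 0) {w F : ℝ → n → ℝ} {B B' : ℝ → ℝ} {s : ℝ}
    (hw : ∀ t ≥ s, HasDerivAt w (D *ᵥ w t + F t) t) (hB : ∀ t ≥ s, HasDerivAt B (B' t) t)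
    (hF : ∀ t ≥ s, ∀ i, B t * ξ i ≤ w t i → F t i ≤ B' t * ξ i) (hs : w s ≤ B s • ξ) :
    ∀ t ≥ s, w t ≤ B t • ξ := by
  have hwi : ∀ i, ∀ t ≥ s, HasDerivAt (fun t => w t i / ξ i) ((D *ᵥ w t + F t) i / ξ i) t :=
    fun i t ht => (hasDerivAt_pi.1 (hw t ht) i).div_const (ξ i)
  intro t ht i
  rw [Pi.smul_apply, smul_eq_mul, ← div_le_iff₀ (hξ i)]
  refine forall_image_le_of_deriv_right_le_deriv_boundary (b := t)
    (fun i x hx => (hwi i x hx.1).continuousAt.continuousWithinAt)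
    (fun i x hx => (hwi i x hx.1).hasDerivWithinAt) (fun i => (div_le_iff₀ (hξ i)).2 (hs i))
    (fun x hx => (hB x hx.1).continuousAt.continuousWithinAt)
    (fun x hx => (hB x hx.1).hasDerivWithinAt) (fun x hx i hi hmax => ?_) ⟨ht, le_rfl⟩ i
  have hle : w x ≤ (w x i / ξ i) • ξ := fun j => (div_le_iff₀ (hξ j)).1 (hmax j)
  have hDw := hD.mulVec_apply_nonpos_of_le_smul hDξ hle (div_mul_cancel₀ _ (hξ i).ne').symm
  have hFi := hF x hx.1 i ((le_div_iff₀ (hξ i)).1 hi)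
  rw [Pi.add_apply, div_le_iff₀ (hξ i)]
  linarith

theorem abs_le_mul_of_hasDerivAt_mulVec_sub_mul (hD : D.IsMetzler_s9) (hξ : ∀ i, 0 < ξ i)
    (hDξ : D *ᵥ ξ = 0) {a w : ℝ → n → ℝ} {B B' : ℝ → ℝ} {s : ℝ}
    (hw : ∀ t ≥ s, HasDerivAt w (D *ᵥ w t - a t * w t) t) (ha : ∀ t ≥ s, 0 ≤ a t)
    (hB : ∀ t ≥ s, HasDerivAt B (B' t) t) (haB : ∀ t ≥ s, ∀ i, -(a t i * B t) ≤ B' t)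
    (hs : ∀ i, |w s i| ≤ B s * ξ i) :
    ∀ t ≥ s, ∀ i, |w t i| ≤ B t * ξ i := by
  have upper : ∀ y : ℝ → n → ℝ, (∀ t ≥ s, HasDerivAt y (D *ᵥ y t + -(a t * y t)) t) →
      y s ≤ B s • ξ → ∀ t ≥ s, y t ≤ B t • ξ := by
    refine fun y hy hys => le_smul_of_hasDerivAt_mulVec_add hD hξ hDξ hy hB
      (fun t ht i hi => ?_) hys
    have h1 := mul_le_mul_of_nonneg_left hi (ha t ht i)
    have h2 := mul_le_mul_of_nonneg_right (haB t ht i) (hξ i).le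
    simp only [Pi.neg_apply, Pi.mul_apply]
    linarith
  intro t ht i
  refine abs_le.2 ⟨?_, upper w (fun t ht => by simpa only [sub_eq_add_neg] using hw t ht)
    (fun j => (abs_le.1 (hs j)).2) t ht i⟩
  have hneg := upper (-w) (fun t ht => (hw t ht).neg.congr_deriv (by
      simp only [Pi.neg_apply, mulVec_neg, mul_neg, neg_neg]; abel))
    (fun j => neg_le.1 (abs_le.1 (hs j)).1) t ht i
  simp only [Pi.neg_apply, Pi.smul_apply, smul_eq_mul] at hneg
  linarith

theorem tendsto_zero_of_hasDerivAt_mulVec_sub_mul (hD : D.IsMetzler_s9) (hξ : ∀ i, 0 < ξ i)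
    (hDξ : D *ᵥ ξ = 0) {a w : ℝ → n → ℝ} {s κ γ : ℝ} (hκ : 0 < κ) (hγ : 0 < γ)
    (hw : ∀ t ≥ s, HasDerivAt w (D *ᵥ w t - a t * w t) t)
    (ha : ∀ t ≥ s, ∀ i, κ / (1 + γ * (t - s)) ≤ a t i) (hs : ∀ i, |w s i| ≤ ξ i) :
    Tendsto w atTop (𝓝 0) := by
  have hρ : ∀ t ≥ s, 0 < 1 + γ * (t - s) := fun t ht => by nlinarith
  have hρ' : ∀ t, HasDerivAt (fun t => 1 + γ * (t - s)) γ t := fun t => by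
    simpa using ((hasDerivAt_id' (x := t)).sub_const s |>.const_mul γ).const_add 1
  -- `(1 + γ (t - s)) ^ (-κ/γ)` solves `B' = -(κ / (1 + γ (t - s))) B`
  have hbound := abs_le_mul_of_hasDerivAt_mulVec_sub_mul hD hξ hDξ hw
    (fun t ht i => (div_pos hκ (hρ t ht)).le.trans (ha t ht i))
    (fun t ht => (hρ' t).rpow_const (p := -(κ / γ)) (Or.inl (hρ t ht).ne')) (fun t ht i => ?_)
    (fun i => by simpa using hs i)
  · have hρ_atTop : Tendsto (fun t => 1 + γ * (t - s)) atTop atTop :=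
      tendsto_atTop_add_const_left _ 1
        ((tendsto_atTop_add_const_right _ (-s) tendsto_id).const_mul_atTop hγ)
    refine tendsto_pi_nhds.2 fun i => squeeze_zero_norm' ?_ (by
      simpa using ((tendsto_rpow_neg_atTop (div_pos hκ hγ)).comp hρ_atTop).mul_const (ξ i))
    filter_upwards [eventually_ge_atTop s] with t ht
    simpa [neg_div] using hbound t ht i
  · have hpow := Real.rpow_nonneg (hρ t ht).le (-(κ / γ))
    have h := mul_le_mul_of_nonneg_right (ha t ht i) hpow
    rw [Real.rpow_sub_one (hρ t ht).ne']
    have : γ * -(κ / γ) * ((1 + γ * (t - s)) ^ (-(κ / γ)) / (1 + γ * (t - s)))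
        = -(κ / (1 + γ * (t - s)) * (1 + γ * (t - s)) ^ (-(κ / γ))) := by
      field_simp
    linarith

theorem smul_le_of_hasDerivAt_cumulant (hD : D.IsMetzler_s9) (hξ : ∀ i, 0 < ξ i)
    (hDξ : D *ᵥ ξ = 0) {u : ℝ → n → ℝ} {c δ γ s : ℝ} (hc : 0 ≤ c) (hδ : 0 ≤ δ)
    (hγ : 0 ≤ γ) (hγξ : ∀ i, c / 2 * δ * ξ i ≤ γ)
    (hu : ∀ t ≥ s, HasDerivAt u (D *ᵥ u t - (c / 2) • (u t * u t)) t)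
    (hu0 : ∀ t ≥ s, 0 ≤ u t) (hs : δ • ξ ≤ u s) :
    ∀ t ≥ s, (δ / (1 + γ * (t - s))) • ξ ≤ u t := by
  have hρ : ∀ t ≥ s, 0 < 1 + γ * (t - s) := fun t ht => by nlinarith
  -- the Riccati solution `m = δ / (1 + γ (t - s))`, `m' = -(γ / δ) m²`, bounds `u / ξ` from below
  have hm : ∀ t ≥ s, HasDerivAt (fun t => -δ / (1 + γ * (t - s)))
      (δ * γ / (1 + γ * (t - s)) ^ 2) t := fun t ht => by
    refine ((hasDerivAt_const t (-δ)).fun_div (((hasDerivAt_id' (x := t)).sub_const s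
      |>.const_mul γ).const_add 1) (hρ t ht).ne').congr_deriv ?_
    simp
  have key := le_smul_of_hasDerivAt_mulVec_add hD hξ hDξ (w := -u)
    (F := fun t => (c / 2) • (u t * u t)) (fun t ht => (hu t ht).neg.congr_deriv (by
      simp only [Pi.neg_apply, mulVec_neg]; abel)) hm (fun t ht i hi => ?_)
    (by simpa [neg_div, neg_smul] using hs)
  · intro t ht
    simpa [neg_div, neg_smul] using key t ht
  · have hui : u t i ≤ δ / (1 + γ * (t - s)) * ξ i := by
      simp only [Pi.neg_apply, neg_div, neg_mul] at hi
      linarith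
    have h0 : 0 ≤ u t i := hu0 t ht i
    have hρt := hρ t ht
    set ρ := 1 + γ * (t - s)
    clear_value ρ
    simp only [Pi.smul_apply, Pi.mul_apply, smul_eq_mul]
    have hmξ : 0 ≤ δ / ρ * ξ i := mul_nonneg (div_nonneg hδ hρt.le) (hξ i).le
    calc c / 2 * (u t i * u t i) ≤ c / 2 * ((δ / ρ * ξ i) * (δ / ρ * ξ i)) := by gcongr
      _ = (c / 2 * δ * ξ i) * (δ * ξ i) / ρ ^ 2 := by ring
      _ ≤ γ * (δ * ξ i) / ρ ^ 2 := by
          gcongr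
          · exact mul_nonneg hδ (hξ i).le
          · exact hγξ i
      _ = δ * γ / ρ ^ 2 * ξ i := by ring

theorem apply_pos_of_hasDerivAt_cumulant (hD : D.IsMetzler_s9) {u : ℝ → n → ℝ} {c s t : ℝ}
    (hst : s ≤ t) (hu : ∀ x ∈ Icc s t, HasDerivAt u (D *ᵥ u x - (c / 2) • (u x * u x)) x)
    (hu0 : ∀ x ∈ Icc s t, 0 ≤ u x) {i : n} (hs : 0 < u s i) : 0 < u t i := by
  have hui : ∀ x ∈ Icc s t,
      HasDerivAt (fun x => u x i) ((D *ᵥ u x) i - c / 2 * (u x i * u x i)) x :=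
    fun x hx => hasDerivAt_pi.1 (hu x hx) i
  obtain ⟨M, hM⟩ := isCompact_Icc.exists_bound_of_continuousOn
    fun x hx => (hui x hx).continuousAt.continuousWithinAt
  refine pos_of_hasDerivAt_of_neg_mul_le (K := |D i i| + |c / 2| * M) hst hui (fun x hx => ?_) hs
  have h0 : 0 ≤ u x i := hu0 x hx i
  have hM' : u x i ≤ M := (le_abs_self _).trans (by simpa using hM x hx)
  have hdiag := hD.diag_mul_le_mulVec_apply (hu0 x hx) i
  have h1 : -|D i i| * u x i ≤ D i i * u x i := mul_le_mul_of_nonneg_right (neg_abs_le _) h0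
  have h2 : c / 2 * (u x i * u x i) ≤ |c / 2| * M * u x i :=
    calc c / 2 * (u x i * u x i) ≤ |c / 2| * (u x i * u x i) :=
          mul_le_mul_of_nonneg_right (le_abs_self _) (mul_nonneg h0 h0)
      _ ≤ |c / 2| * (M * u x i) := by gcongr
      _ = |c / 2| * M * u x i := by ring
  nlinarith

theorem eventually_pos_of_hasDerivAt_cumulant (hD : D.IsMetzler_s9)
    (hirr : ∀ J : Finset n, J.Nonempty → J ≠ Finset.univ → ∃ j ∈ J, ∃ i ∉ J, 0 < D j i)
    {u : ℝ → n → ℝ} {c s : ℝ}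
    (hu : ∀ t ≥ s, HasDerivAt u (D *ᵥ u t - (c / 2) • (u t * u t)) t)
    (hu0 : ∀ t ≥ s, 0 ≤ u t) (hus : u s ≠ 0) :
    ∀ᶠ t in atTop, ∀ i, 0 < u t i := by
  classical
  have persist : ∀ i, ∀ t₀ ≥ s, 0 < u t₀ i → ∀ᶠ t in atTop, 0 < u t i :=
    fun i t₀ ht₀ h => (eventually_ge_atTop t₀).mono fun t ht =>
      apply_pos_of_hasDerivAt_cumulant hD ht (fun x hx => hu x (ht₀.trans hx.1))
        (fun x hx => hu0 x (ht₀.trans hx.1)) h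
  set S := Finset.univ.filter fun i => ∀ᶠ t in atTop, 0 < u t i
  suffices hS : S = Finset.univ from
    eventually_all.2 fun i => (Finset.mem_filter.1 (hS.ge (Finset.mem_univ i))).2
  refine finset_eq_univ_of_irreducible hirr ?_ fun i hi j hji => ?_
  · obtain ⟨i, hi⟩ : ∃ i, 0 < u s i := by
      by_contra! h
      exact hus (le_antisymm h (hu0 s le_rfl))
    exact ⟨i, Finset.mem_filter.2 ⟨Finset.mem_univ i, persist i s le_rfl hi⟩⟩
  obtain ⟨t, hti, hst⟩ := ((Finset.mem_filter.1 hi).2.and (eventually_gt_atTop s)).exists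
  refine Finset.mem_filter.2 ⟨Finset.mem_univ j,
    persist j t hst.le ((hu0 t hst.le j).lt_of_ne' fun hutj => ?_)⟩
  -- `u · j` has a local minimum `0` at `t`, where its derivative is at least `D j i * u t i > 0`
  have hmin : IsLocalMin (fun x => u x j) t := by
    filter_upwards [Ioi_mem_nhds hst] with x hx
    rw [hutj]
    exact hu0 x hx.le j
  have hderiv := hmin.hasDerivAt_eq_zero (hasDerivAt_pi.1 (hu t hst.le) j)
  have hDu := hD.mul_le_mulVec_apply_of_apply_eq_zero (hu0 t hst.le) hutj i
  simp only [Pi.sub_apply, Pi.smul_apply, Pi.mul_apply, hutj, Pi.zero_apply, mul_zero,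
    smul_zero, sub_zero] at hderiv
  linarith [mul_pos hji hti]

end MetzlerSystem

theorem stmt9_general (k : ℕ) (hk : 1 ≤ k) (c : ℝ) (hc : 0 < c)
    (D : Matrix (Fin k) (Fin k) ℝ)
    (hMetzler : ∀ i j : Fin k, i ≠ j → 0 ≤ D i j)
    (hirr : ∀ J : Finset (Fin k), J.Nonempty → J ≠ Finset.univ →
      ∃ j ∈ J, ∃ i ∉ J, 0 < D j i)
    (ξ : Fin k → ℝ) (hξpos : ∀ i, 0 < ξ i)
    (heig : D.mulVec ξ = 0)
    (lam : Fin k → ℝ) (hlam0 : lam ≠ 0)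
    (u : ℝ → Fin k → ℝ)
    (husol : ∀ t ∈ Set.Ici (0 : ℝ),
      HasDerivAt u (D.mulVec (u t) - (c / 2) • (u t * u t)) t)
    (hunonneg : ∀ t ∈ Set.Ici (0 : ℝ), ∀ i : Fin k, 0 ≤ u t i)
    (huinit : u 0 = lam)
    (v : ℝ → Fin k → ℝ)
    (hvsol : ∀ t ∈ Set.Ici (0 : ℝ),
      HasDerivAt v (D.mulVec (v t) - c • (u t * v t)) t)
    (hvinit : v 0 = ξ) :
    Tendsto v atTop (𝓝 0) := by
  have : Nonempty (Fin k) := ⟨⟨0, hk⟩⟩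
  have hv : ∀ t ≥ 0, HasDerivAt v (D *ᵥ v t - c • u t * v t) t := fun t ht => by
    simpa only [smul_mul_assoc] using hvsol t ht
  obtain ⟨T, hTpos, hT⟩ := ((eventually_pos_of_hasDerivAt_cumulant hMetzler hirr husol hunonneg
    (huinit ▸ hlam0)).and (eventually_ge_atTop 0)).exists
  obtain ⟨i₀, hi₀⟩ := Finite.exists_min fun i => u T i / ξ i
  obtain ⟨imin, himin⟩ := Finite.exists_min ξ
  obtain ⟨imax, himax⟩ := Finite.exists_max ξ
  set δ := u T i₀ / ξ i₀
  have hδ : 0 < δ := div_pos (hTpos i₀) (hξpos i₀)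
  have hlow := smul_le_of_hasDerivAt_cumulant (γ := c / 2 * δ * ξ imax) hMetzler hξpos heig
    hc.le hδ.le (by have := hξpos imax; positivity) (fun i => by gcongr; exact himax i)
    (fun t ht => husol t (hT.trans ht)) (fun t ht => hunonneg t (hT.trans ht))
    (fun i => show δ * ξ i ≤ u T i from (le_div_iff₀ (hξpos i)).1 (hi₀ i))
  have hvT : ∀ i, |v T i| ≤ ξ i := by
    simpa using abs_le_mul_of_hasDerivAt_mulVec_sub_mul hMetzler hξpos heig hv
      (fun t ht => smul_nonneg hc.le (hunonneg t ht)) (fun t _ => hasDerivAt_const t 1)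
      (fun t ht i => by simpa using mul_nonneg hc.le (hunonneg t ht i))
      (fun i => by simp [hvinit, abs_of_pos (hξpos i)]) T hT
  refine tendsto_zero_of_hasDerivAt_mulVec_sub_mul (γ := c / 2 * δ * ξ imax) hMetzler hξpos heig
    (mul_pos (mul_pos hc hδ) (hξpos imin)) (by have := hξpos imax; positivity)
    (fun t ht => hv t (hT.trans ht)) (fun t ht i => ?_) hvT
  have hρ : 0 < 1 + c / 2 * δ * ξ imax * (t - T) := by
    have := hξpos imax; have : 0 ≤ t - T := sub_nonneg.2 ht; positivity
  calc c * δ * ξ imin / (1 + c / 2 * δ * ξ imax * (t - T))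
      = c * (δ / (1 + c / 2 * δ * ξ imax * (t - T)) * ξ imin) := by ring
    _ ≤ c * (δ / (1 + c / 2 * δ * ξ imax * (t - T)) * ξ i) := by gcongr; exact himin i
    _ ≤ c * u t i := by gcongr; exact hlow t ht i

/-- (From the proof of Theorem 3.4 (a) of the paper.) In the critical
irreducible case (`D ξ = 0`, `ξ > 0`), if `u` is a nonnegative solution of the
cumulant system with `u_0 = λ ≥ 0`, `λ ≠ 0`, and `v` solves the linearized system
`dv_t/dt = D v_t − c u_t ⊙ v_t` with `v_0 = ξ`, then `v_t → 0` as `t → ∞`. -/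
theorem stmt9 (k : ℕ) (hk : 1 ≤ k) (c : ℝ) (hc : 0 < c)
    (D : Matrix (Fin k) (Fin k) ℝ)
    (hMetzler : ∀ i j : Fin k, i ≠ j → 0 ≤ D i j)
    (hirr : ∀ J : Finset (Fin k), J.Nonempty → J ≠ Finset.univ →
      ∃ j ∈ J, ∃ i ∉ J, 0 < D j i)
    (ξ : Fin k → ℝ) (hξpos : ∀ i, 0 < ξ i)
    (heig : D.mulVec ξ = 0)
    (lam : Fin k → ℝ) (hlam : ∀ i, 0 ≤ lam i) (hlam0 : lam ≠ 0)
    (u : ℝ → Fin k → ℝ)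
    (husol : ∀ t ∈ Set.Ici (0 : ℝ),
      HasDerivAt u (D.mulVec (u t) - (c / 2) • (u t * u t)) t)
    (hunonneg : ∀ t ∈ Set.Ici (0 : ℝ), ∀ i : Fin k, 0 ≤ u t i)
    (huinit : u 0 = lam)
    (v : ℝ → Fin k → ℝ)
    (hvsol : ∀ t ∈ Set.Ici (0 : ℝ),
      HasDerivAt v (D.mulVec (v t) - c • (u t * v t)) t)
    (hvinit : v 0 = ξ) :
    Tendsto v atTop (𝓝 0) :=
  stmt9_general k hk c hc D hMetzler hirr ξ hξpos heig lam hlam0 u husol hunonneg huinit v hvsol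
    hvinit
end
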